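/- arXiv:2603.03141 — 5 statements merged into one kernel-verified Lean document; each statement's English description precedes it below -/
import Mathlib

section
/- Let σ be a well-formed trace. If σ contains a pair of conflicting events that is an HB race in σ, then σ contains a pair of conflicting events that is a sync-preserving race in σ. -/
/-!
Events, traces, and predictive data races.

An event datum is a pair of a thread identifier and an operation
(read/write of a memory location, or acquire/release of a lock).
Following the convention that events of a trace are identified with
positions (hence pairwise distinct), a trace is modeled as a
duplicate-free list of event *identifiers* (natural numbers), listed
in trace order, together with a global data assignment
`ev : ℕ → EventData` giving the thread and operation of each event.
-/

inductive Op : Type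
  | read : ℕ → Op
  | write : ℕ → Op
  | acq : ℕ → Op
  | rel : ℕ → Op
  deriving DecidableEq

structure EventData : Type where
  thread : ℕ
  op : Op
  deriving DecidableEq

abbrev Trace : Type := List ℕ

namespace Race

variable (ev : ℕ → EventData)

/-- Trace order: `e1` occurs no later than `e2` in `σ`. -/
def trord (σ : Trace) (e1 e2 : ℕ) : Prop :=
  e1 ∈ σ ∧ e2 ∈ σ ∧ σ.idxOf e1 ≤ σ.idxOf e2

/-- Thread order: trace order plus equality of threads. -/
def threadOrd (σ : Trace) (e1 e2 : ℕ) : Prop :=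
  trord σ e1 e2 ∧ (ev e1).thread = (ev e2).thread

/-- Lock-semantics check: `h` records, for each lock, the thread currently
holding it.  A lock may be acquired only when free, and released only by
the thread holding it. -/
def lockOk : (ℕ → Option ℕ) → Trace → Prop
  | _, [] => True
  | h, e :: rest =>
    match (ev e).op with
    | Op.acq l => h l = none ∧ lockOk (Function.update h l (some (ev e).thread)) rest
    | Op.rel l => h l = some (ev e).thread ∧ lockOk (Function.update h l none) rest
    | _ => lockOk h rest

/-- A well-formed trace: pairwise distinct events respecting lock semantics. -/
def WellFormed (σ : Trace) : Prop := σ.Nodup ∧ lockOk ev (fun _ => none) σ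

/-- A well-formed subtrace: a contiguous subtrace of some well-formed trace. -/
def WellFormedSub (σ : Trace) : Prop :=
  ∃ pre suf : Trace, WellFormed ev (pre ++ σ ++ suf)

/-- Happens-before: the smallest partial order on the events of `σ` containing
thread order and ordering each release before every later acquire of the
same lock. -/
inductive HB (σ : Trace) : ℕ → ℕ → Prop
  | thread_order {e1 e2 : ℕ} : threadOrd ev σ e1 e2 → HB σ e1 e2
  | rel_acq {e1 e2 l : ℕ} :
      trord σ e1 e2 → (ev e1).op = Op.rel l → (ev e2).op = Op.acq l → HB σ e1 e2
  | trans {e1 e2 e3 : ℕ} : HB σ e1 e2 → HB σ e2 e3 → HB σ e1 e3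

def isWrite (o : Op) : Prop := ∃ x, o = Op.write x

/-- The memory location accessed by an operation, if any. -/
def loc : Op → Option ℕ
  | Op.read x => some x
  | Op.write x => some x
  | _ => none

/-- Conflicting events: same location, different threads, at least one write. -/
def Conflicting (e1 e2 : ℕ) : Prop :=
  (ev e1).thread ≠ (ev e2).thread ∧
  (∃ x, loc (ev e1).op = some x ∧ loc (ev e2).op = some x) ∧
  (isWrite (ev e1).op ∨ isWrite (ev e2).op)

/-- An HB race: a conflicting pair of events of `σ`, unordered by happens-before. -/
def HBRace (σ : Trace) (e1 e2 : ℕ) : Prop :=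
  e1 ∈ σ ∧ e2 ∈ σ ∧ Conflicting ev e1 e2 ∧ ¬ HB ev σ e1 e2 ∧ ¬ HB ev σ e2 e1

/-- `lw σ e`: the last write (to the location read by `e`) before `e` in `σ`. -/
def lw (σ : Trace) (e : ℕ) : Option ℕ :=
  match (ev e).op with
  | Op.read x =>
      ((σ.take (σ.idxOf e)).filter fun f => decide ((ev f).op = Op.write x)).getLast?
  | _ => none

/-- The matching release of an acquire: the first release of the same lock after it. -/
def matchRel (σ : Trace) (a : ℕ) : Option ℕ :=
  match (ev a).op with
  | Op.acq l =>
      ((σ.drop (σ.idxOf a + 1)).filter fun f => decide ((ev f).op = Op.rel l)).head?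
  | _ => none

/-- The matching acquire of a release: the last acquire of the same lock before it. -/
def matchAcq (σ : Trace) (r : ℕ) : Option ℕ :=
  match (ev r).op with
  | Op.rel l =>
      ((σ.take (σ.idxOf r)).filter fun f => decide ((ev f).op = Op.acq l)).getLast?
  | _ => none

/-- The last event of the same thread before `e` in `σ`. -/
def prevE (σ : Trace) (e : ℕ) : Option ℕ :=
  ((σ.take (σ.idxOf e)).filter fun f => decide ((ev f).thread = (ev e).thread)).getLast?

/-- `ρ` is a correct reordering of `σ`. -/
structure CorrectReordering (σ ρ : Trace) : Prop where
  wf : WellFormed ev ρ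
  subset : ∀ e ∈ ρ, e ∈ σ
  to_closed : ∀ e1 e2 : ℕ, threadOrd ev σ e1 e2 → e2 ∈ ρ → e1 ∈ ρ ∧ threadOrd ev ρ e1 e2
  lw_eq : ∀ e ∈ ρ, (∃ x, (ev e).op = Op.read x) → lw ev ρ e = lw ev σ e

/-- `e` is enabled in the correct reordering `ρ` of `σ`. -/
def Enabled (σ ρ : Trace) (e : ℕ) : Prop :=
  e ∈ σ ∧ e ∉ ρ ∧ ∀ f : ℕ, threadOrd ev σ f e → f ≠ e → f ∈ ρ

/-- A reordering is sync-preserving if acquires of a common lock keep their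
relative order from `σ`. -/
def SyncPres (σ ρ : Trace) : Prop :=
  ∀ a1 a2 l : ℕ, a1 ∈ ρ → a2 ∈ ρ → (ev a1).op = Op.acq l → (ev a2).op = Op.acq l →
    (trord ρ a1 a2 ↔ trord σ a1 a2)

/-- A sync-preserving race. -/
def SyncPresRace (σ : Trace) (e1 e2 : ℕ) : Prop :=
  e1 ∈ σ ∧ e2 ∈ σ ∧ Conflicting ev e1 e2 ∧
  ∃ ρ : Trace, CorrectReordering ev σ ρ ∧ SyncPres ev σ ρ ∧
    Enabled ev σ ρ e1 ∧ Enabled ev σ ρ e2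

/-- A predictive race. -/
def PredictiveRace (σ : Trace) (e1 e2 : ℕ) : Prop :=
  e1 ∈ σ ∧ e2 ∈ σ ∧ Conflicting ev e1 e2 ∧
  ∃ ρ : Trace, CorrectReordering ev σ ρ ∧ Enabled ev σ ρ e1 ∧ Enabled ev σ ρ e2

/-- A subset of the events of `σ`, downward closed under thread order and
closed under last-writes. -/
def TLClosed (σ : Trace) (S : Set ℕ) : Prop :=
  (∀ e ∈ S, e ∈ σ) ∧
  (∀ e1 e2 : ℕ, threadOrd ev σ e1 e2 → e2 ∈ S → e1 ∈ S) ∧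
  (∀ e ∈ S, ∀ f : ℕ, lw ev σ e = some f → f ∈ S)

/-- The smallest TL-closed set containing `S`. -/
def TLClosure (σ : Trace) (S : Set ℕ) : Set ℕ :=
  ⋂₀ {C : Set ℕ | TLClosed ev σ C ∧ S ⊆ C}

/-- Sync-preserving closed sets. -/
def SPClosed (σ : Trace) (S : Set ℕ) : Prop :=
  TLClosed ev σ S ∧
  ∀ a1 a2 l : ℕ, a1 ∈ S → a2 ∈ S → (ev a1).op = Op.acq l → (ev a2).op = Op.acq l →
    trord σ a1 a2 → a1 ≠ a2 → ∀ r : ℕ, matchRel ev σ a1 = some r → r ∈ S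

/-- The smallest sync-preserving closed set containing `S`. -/
def SPClosure (σ : Trace) (S : Set ℕ) : Set ℕ :=
  ⋂₀ {C : Set ℕ | SPClosed ev σ C ∧ S ⊆ C}

/-- `SPIdeal σ e1 e2 = SPClosure σ ({prev σ e1, prev σ e2} \ {⊥})`. -/
def SPIdeal (σ : Trace) (e1 e2 : ℕ) : Set ℕ :=
  SPClosure ev σ {f : ℕ | prevE ev σ e1 = some f ∨ prevE ev σ e2 = some f}

/-- Local time: the number of events strictly below `e` in thread order. -/
def ltime (σ : Trace) (e : ℕ) : ℕ :=
  ((σ.take (σ.idxOf e)).filter fun f => decide ((ev f).thread = (ev e).thread)).length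

/-- Causal timestamp: for each thread `t`, the maximum local time of an
event of thread `t` happening before `e` (and `-1` if there is none). -/
noncomputable def ctime (σ : Trace) (e : ℕ) (t : ℕ) : ℤ :=
  sSup (insert (-1)
    {n : ℤ | ∃ f ∈ σ, (ev f).thread = t ∧ HB ev σ f e ∧ n = (ltime ev σ f : ℤ)})

end Race

/-!
Take an HB race `(x, y)` whose later event occurs as early as possible, and keep, in trace
order, exactly the events that happen strictly before `x` or `y`. This set is closed under
happens-before predecessors, and also under last writes: a read in it that did not happen after
its last write would form an earlier HB race. Such a restriction is a correct reordering: thread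
order and last writes are preserved, and since the events on a common lock are totally ordered by
happens-before, each lock performs a prefix of its original acquire/release sequence. Being a
subsequence of the trace, the restriction is sync-preserving, and `x` and `y` are enabled in it.
-/

namespace List

variable {α : Type*} [BEq α] [LawfulBEq α]

theorem idxOf_filter_le_idxOf_filter_iff (p : α → Bool) {l : List α} {a b : α}
    (ha : a ∈ l.filter p) (hb : b ∈ l.filter p) :
    (l.filter p).idxOf a ≤ (l.filter p).idxOf b ↔ l.idxOf a ≤ l.idxOf b := by
  induction l with
  | nil => simp at ha
  | cons c l ih =>
    simp only [filter_cons, mem_filter] at *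
    by_cases hpc : p c <;> by_cases hac : a = c <;> by_cases hbc : b = c <;>
      simp_all [Ne.symm]

theorem take_idxOf_filter (p : α → Bool) {l : List α} {a : α} (ha : a ∈ l.filter p) :
    (l.filter p).take ((l.filter p).idxOf a) = (l.take (l.idxOf a)).filter p := by
  induction l with
  | nil => simp at ha
  | cons c l ih =>
    simp only [filter_cons, mem_filter] at *
    by_cases hpc : p c <;> by_cases hac : a = c <;> simp_all [Ne.symm]

theorem idxOf_lt_of_mem_take {l : List α} {n : ℕ} {a : α} (h : a ∈ l.take n) :
    l.idxOf a < n := by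
  induction l generalizing n with
  | nil => simp at h
  | cons c l ih =>
    cases n with
    | zero => simp at h
    | succ n => by_cases hac : a = c <;> simp_all [Ne.symm]

omit [BEq α] [LawfulBEq α] in
theorem getLast?_filter_of_getLast? {p : α → Bool} {l : List α} {w : α}
    (h : l.getLast? = some w) (hw : p w) : (l.filter p).getLast? = some w := by
  induction l using List.reverseRecOn with
  | nil => simp at h
  | append_singleton l a _ => simp_all

end List

namespace Race

variable {ev : ℕ → EventData} {σ : Trace}

theorem trord_filter_iff (p : ℕ → Bool) {a b : ℕ} (ha : a ∈ σ.filter p)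
    (hb : b ∈ σ.filter p) : trord (σ.filter p) a b ↔ trord σ a b := by
  simp only [trord, List.idxOf_filter_le_idxOf_filter_iff p ha hb, ha, hb, true_and,
    (List.mem_filter.mp ha).1, (List.mem_filter.mp hb).1]

theorem pairwise_trord (hσ : σ.Nodup) : σ.Pairwise (trord σ) := by
  rw [List.pairwise_iff_getElem]
  intro i j hi hj hij
  refine ⟨List.getElem_mem hi, List.getElem_mem hj, ?_⟩
  rw [hσ.idxOf_getElem, hσ.idxOf_getElem]
  exact hij.le

theorem trord_of_HB {a b : ℕ} (h : HB ev σ a b) : trord σ a b := by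
  induction h with
  | thread_order h => exact h.1
  | rel_acq h _ _ => exact h
  | trans _ _ ih1 ih2 => exact ⟨ih1.1, ih2.2.1, ih1.2.2.trans ih2.2.2⟩

theorem HB.idxOf_lt {a b : ℕ} (h : HB ev σ a b) (hab : a ≠ b) : σ.idxOf a < σ.idxOf b :=
  (trord_of_HB h).2.2.lt_of_ne fun he => hab ((List.idxOf_inj (trord_of_HB h).1).mp he)

def lockOf : Op → Option ℕ
  | Op.acq l => some l
  | Op.rel l => some l
  | _ => none

variable (ev) in
def holderAfter (e : ℕ) : Option ℕ :=
  match (ev e).op with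
  | Op.acq _ => some (ev e).thread
  | _ => none

variable (ev) in
def LockAllowed (s : Option ℕ) (e : ℕ) : Prop :=
  match (ev e).op with
  | Op.acq _ => s = none
  | Op.rel _ => s = some (ev e).thread
  | _ => True

variable (ev) in
/-- The shape of two consecutive events on a common lock in a well-formed trace. -/
def LockStep (e f : ℕ) : Prop :=
  ∃ l, ((ev e).op = Op.acq l ∧ (ev f).op = Op.rel l ∧ (ev e).thread = (ev f).thread) ∨
    ((ev e).op = Op.rel l ∧ (ev f).op = Op.acq l)

theorem mem_filter_lockOf {τ : Trace} {l f : ℕ} :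
    f ∈ τ.filter (fun f => lockOf (ev f).op = some l) ↔
      f ∈ τ ∧ lockOf (ev f).op = some l := by
  simp

theorem lockOk_cons_of_lockOf_eq_some {h : ℕ → Option ℕ} {e l : ℕ} {τ : Trace}
    (hl : lockOf (ev e).op = some l) :
    lockOk ev h (e :: τ) ↔
      LockAllowed ev (h l) e ∧ lockOk ev (Function.update h l (holderAfter ev e)) τ := by
  rcases hop : (ev e).op with _ | _ | l' | l' <;> rw [hop] at hl <;> cases hl <;>
    simp [lockOk, LockAllowed, holderAfter, hop]

theorem lockOk_cons_of_lockOf_eq_none {h : ℕ → Option ℕ} {e : ℕ} {τ : Trace}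
    (hl : lockOf (ev e).op = none) : lockOk ev h (e :: τ) ↔ lockOk ev h τ := by
  rcases hop : (ev e).op with _ | _ | l' | l' <;> rw [hop] at hl <;> cases hl <;>
    simp [lockOk, hop]

theorem lockOk.tail {h : ℕ → Option ℕ} {e : ℕ} {τ : Trace} (hτ : lockOk ev h (e :: τ)) :
    ∃ h', lockOk ev h' τ ∧ ∀ l, lockOf (ev e).op ≠ some l → h' l = h l := by
  rcases hl : lockOf (ev e).op with _ | l
  · exact ⟨h, (lockOk_cons_of_lockOf_eq_none hl).mp hτ, fun _ _ => rfl⟩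
  · refine ⟨_, ((lockOk_cons_of_lockOf_eq_some hl).mp hτ).2, fun l' hl' => ?_⟩
    exact Function.update_of_ne (fun hll => hl' (by rw [hll])) _ _

theorem lockOk.lockAllowed_first {s : ℕ → Option ℕ} {τ : Trace} {l n : ℕ} {L : List ℕ}
    (hτ : lockOk ev s τ) (hfirst : τ.filter (fun f => lockOf (ev f).op = some l) = n :: L) :
    LockAllowed ev (s l) n := by
  induction τ generalizing s with
  | nil => simp at hfirst
  | cons g τ ih =>
    by_cases hg : lockOf (ev g).op = some l
    · rw [List.filter_cons_of_pos (by simpa using hg)] at hfirst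
      cases hfirst
      exact ((lockOk_cons_of_lockOf_eq_some hg).mp hτ).1
    · rw [List.filter_cons_of_neg (by simpa using hg)] at hfirst
      obtain ⟨s', hs', hs'l⟩ := hτ.tail
      exact hs'l l hg ▸ ih hs' hfirst

theorem lockOk.lockStep_first {h : ℕ → Option ℕ} {e l n : ℕ} {τ L : List ℕ}
    (hτ : lockOk ev h (e :: τ)) (hl : lockOf (ev e).op = some l)
    (hfirst : τ.filter (fun f => lockOf (ev f).op = some l) = n :: L) : LockStep ev e n := by
  have hn : lockOf (ev n).op = some l := (mem_filter_lockOf.mp (hfirst ▸ List.mem_cons_self)).2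
  have hallowed := ((lockOk_cons_of_lockOf_eq_some hl).mp hτ).2.lockAllowed_first hfirst
  simp only [Function.update_self] at hallowed
  refine ⟨l, ?_⟩
  rcases hope : (ev e).op with _ | _ | l₁ | l₁ <;> rw [hope] at hl <;> cases hl <;>
    rcases hopn : (ev n).op with _ | _ | l₂ | l₂ <;> rw [hopn] at hn <;> cases hn <;>
    simp_all [LockAllowed, holderAfter]

theorem lockOk.pairwise_sameLock {R : ℕ → ℕ → Prop}
    (hR : ∀ {a b c}, R a b → R b c → R a c) {h : ℕ → Option ℕ} {τ : Trace}
    (hτ : lockOk ev h τ)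
    (hstep : τ.Pairwise fun e f => LockStep ev e f → R e f) :
    τ.Pairwise fun e f =>
      ∀ l, lockOf (ev e).op = some l → lockOf (ev f).op = some l → R e f := by
  induction τ generalizing h with
  | nil => exact List.Pairwise.nil
  | cons e τ ih =>
    rw [List.pairwise_cons] at hstep ⊢
    obtain ⟨h', hτ', -⟩ := hτ.tail
    have hrest := ih hτ' hstep.2
    refine ⟨fun f hf l hel hfl => ?_, hrest⟩
    have hf' : f ∈ τ.filter (fun f => lockOf (ev f).op = some l) :=
      mem_filter_lockOf.mpr ⟨hf, hfl⟩
    obtain ⟨n, L, hnL⟩ := List.exists_cons_of_ne_nil (List.ne_nil_of_mem hf')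
    have hn : n ∈ τ := (mem_filter_lockOf.mp (hnL ▸ List.mem_cons_self)).1
    have hen : R e n := hstep.1 n hn (hτ.lockStep_first hel hnL)
    rw [hnL] at hf'
    rcases List.mem_cons.mp hf' with rfl | hfL
    · exact hen
    · have hnf := List.rel_of_pairwise_cons (hnL ▸ hrest.filter _) hfL
      exact hR hen (hnf l (mem_filter_lockOf.mp (hnL ▸ List.mem_cons_self)).2 hfl)

/-- Simulation argument: while `ρ = τ.filter p` is run alongside `τ`, each lock is either held
by the same thread in both runs, or none of its remaining events is selected by `p`. -/
theorem lockOk.filter {p : ℕ → Bool} {h h' : ℕ → Option ℕ} {τ : Trace}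
    (hτ : lockOk ev h τ)
    (hinv : ∀ l, h' l = h l ∨ ∀ f ∈ τ, lockOf (ev f).op = some l → p f = false)
    (hprefix : τ.Pairwise fun e f =>
      ∀ l, lockOf (ev e).op = some l → lockOf (ev f).op = some l → p f → p e) :
    lockOk ev h' (τ.filter p) := by
  induction τ generalizing h h' with
  | nil => trivial
  | cons e τ ih =>
    rw [List.pairwise_cons] at hprefix
    have hinv' : ∀ l, h' l = h l ∨ ∀ f ∈ τ, lockOf (ev f).op = some l → p f = false :=
      fun l => (hinv l).imp_right fun H f hf => H f (List.mem_cons_of_mem e hf)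
    rcases hl : lockOf (ev e).op with _ | l
    · rw [lockOk_cons_of_lockOf_eq_none hl] at hτ
      by_cases hp : p e
      · rw [List.filter_cons_of_pos hp, lockOk_cons_of_lockOf_eq_none hl]
        exact ih hτ hinv' hprefix.2
      · rw [List.filter_cons_of_neg hp]
        exact ih hτ hinv' hprefix.2
    · rw [lockOk_cons_of_lockOf_eq_some hl] at hτ
      by_cases hp : p e
      · have hh' : h' l = h l := (hinv l).resolve_right fun H => by
          simp [H e List.mem_cons_self hl] at hp
        rw [List.filter_cons_of_pos hp, lockOk_cons_of_lockOf_eq_some hl, hh']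
        refine ⟨hτ.1, ih hτ.2 (fun l' => ?_) hprefix.2⟩
        by_cases hl' : l' = l
        · subst hl'; simp
        · simpa [Function.update_of_ne hl'] using hinv' l'
      · rw [List.filter_cons_of_neg hp]
        refine ih hτ.2 (fun l' => ?_) hprefix.2
        by_cases hl' : l' = l
        · subst hl'
          exact Or.inr fun f hf hfl => by
            simpa [hp] using mt (hprefix.1 f hf l' hl hfl)
        · simpa [Function.update_of_ne hl'] using hinv' l'

theorem HB.of_lockStep {e f : ℕ} (hef : trord σ e f) (hstep : LockStep ev e f) :
    HB ev σ e f := by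
  obtain ⟨l, ⟨hacq, hrel, hthread⟩ | ⟨hrel, hacq⟩⟩ := hstep
  · exact HB.thread_order ⟨hef, hthread⟩
  · exact HB.rel_acq hef hrel hacq

theorem lw_of_read {e z : ℕ} (hop : (ev e).op = Op.read z) :
    lw ev σ e =
      ((σ.take (σ.idxOf e)).filter fun f => decide ((ev f).op = Op.write z)).getLast? := by
  simp only [lw, hop]

theorem lw_spec {e w : ℕ} (hw : lw ev σ e = some w) :
    ∃ z, (ev e).op = Op.read z ∧ (ev w).op = Op.write z ∧ w ∈ σ ∧
      σ.idxOf w < σ.idxOf e := by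
  rcases hop : (ev e).op with z | _ | _ | _ <;> simp only [lw, hop, reduceCtorEq] at hw
  obtain ⟨hwσ, hwz⟩ := List.mem_filter.mp (List.mem_of_getLast? hw)
  exact ⟨z, rfl, of_decide_eq_true hwz, List.take_subset _ _ hwσ,
    List.idxOf_lt_of_mem_take hwσ⟩

theorem correctReordering_filter {p : ℕ → Bool} (hσ : WellFormed ev σ)
    (hHB : ∀ e f, HB ev σ e f → p f → p e)
    (hlw : ∀ e w, p e → lw ev σ e = some w → p w) :
    CorrectReordering ev σ (σ.filter p) where
  wf := by
    refine ⟨hσ.1.filter p, hσ.2.filter (fun _ => Or.inl rfl) ?_⟩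
    have hstep : σ.Pairwise fun e f => LockStep ev e f → HB ev σ e f :=
      (pairwise_trord hσ.1).imp HB.of_lockStep
    exact (hσ.2.pairwise_sameLock (R := HB ev σ) HB.trans hstep).imp
      fun {e f} H l he hf => hHB e f (H l he hf)
  subset _ he := (List.mem_filter.mp he).1
  to_closed e f hef hf := by
    have he : e ∈ σ.filter p := List.mem_filter.mpr
      ⟨hef.1.1, hHB e f (HB.thread_order hef) (List.mem_filter.mp hf).2⟩
    exact ⟨he, (trord_filter_iff p he hf).mpr hef.1, hef.2⟩
  lw_eq e he := by
    rintro ⟨z, hop⟩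
    rw [lw_of_read hop, lw_of_read hop, List.take_idxOf_filter p he, List.filter_comm]
    cases hlast : ((σ.take (σ.idxOf e)).filter fun f => decide ((ev f).op = Op.write z)).getLast?
      with
    | none => simp_all
    | some w =>
      exact List.getLast?_filter_of_getLast? hlast
        (hlw e w (List.mem_filter.mp he).2 (by rw [lw_of_read hop, hlast]))

theorem syncPres_filter (p : ℕ → Bool) : SyncPres ev σ (σ.filter p) :=
  fun _ _ _ h₁ h₂ _ _ => trord_filter_iff p h₁ h₂

variable (ev σ) in
def StrictPast (T : Set ℕ) (f : ℕ) : Prop := ∃ t ∈ T, HB ev σ f t ∧ f ≠ t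

theorem StrictPast.of_hb {T : Set ℕ} {f g : ℕ} (hfg : HB ev σ f g)
    (hg : StrictPast ev σ T g) : StrictPast ev σ T f := by
  obtain ⟨t, ht, hgt, hne⟩ := hg
  refine ⟨t, ht, hfg.trans hgt, ?_⟩
  rintro rfl
  exact (hgt.idxOf_lt hne).not_ge (trord_of_HB hfg).2.2

theorem enabled_filter_strictPast {T : Set ℕ} [DecidablePred (StrictPast ev σ T)] {x : ℕ}
    (hx : x ∈ σ) (hxT : x ∈ T) (hmax : ∀ t ∈ T, HB ev σ x t → x = t) :
    Enabled ev σ (σ.filter fun f => decide (StrictPast ev σ T f)) x := by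
  refine ⟨hx, fun hmem => ?_, fun f hf hne => ?_⟩
  · obtain ⟨t, ht, hxt, hne⟩ := of_decide_eq_true (List.mem_filter.mp hmem).2
    exact hne (hmax t ht hxt)
  · exact List.mem_filter.mpr ⟨hf.1.1, decide_eq_true ⟨x, hxT, HB.thread_order hf, hne⟩⟩

variable (ev σ) in
def EarliestHBRace (x y : ℕ) : Prop :=
  HBRace ev σ x y ∧
    ∀ a b, HBRace ev σ a b → max (σ.idxOf x) (σ.idxOf y) ≤ max (σ.idxOf a) (σ.idxOf b)

theorem exists_earliestHBRace (h : ∃ a b, HBRace ev σ a b) :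
    ∃ x y, EarliestHBRace ev σ x y := by
  classical
  have hex : ∃ n a b, HBRace ev σ a b ∧ max (σ.idxOf a) (σ.idxOf b) = n :=
    let ⟨a, b, hab⟩ := h
    ⟨_, a, b, hab, rfl⟩
  obtain ⟨x, y, hxy, hn⟩ := Nat.find_spec hex
  exact ⟨x, y, hxy, fun a b hab => hn ▸ Nat.find_min' hex ⟨a, b, hab, rfl⟩⟩

/-- Otherwise the read and its last write would form an earlier race. -/
theorem HB.of_lw_of_lt_earliest {x y e w : ℕ} (hxy : EarliestHBRace ev σ x y)
    (hw : lw ev σ e = some w) (he : σ.idxOf e < max (σ.idxOf x) (σ.idxOf y)) :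
    HB ev σ w e := by
  obtain ⟨z, hre, hww, hwσ, hlt⟩ := lw_spec hw
  have heσ : e ∈ σ := List.idxOf_lt_length_iff.mp <|
    he.trans_le (max_le List.idxOf_le_length List.idxOf_le_length)
  by_contra hnot
  have hthread : (ev w).thread ≠ (ev e).thread := fun hth =>
    hnot (HB.thread_order ⟨⟨hwσ, heσ, hlt.le⟩, hth⟩)
  have hrace : HBRace ev σ w e :=
    ⟨hwσ, heσ, ⟨hthread, ⟨z, by simp [loc, hww], by simp [loc, hre]⟩, Or.inl ⟨z, hww⟩⟩,
      hnot, fun hew => hlt.not_ge (trord_of_HB hew).2.2⟩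
  have := hxy.2 w e hrace
  omega

theorem StrictPast.lw_closed {x y e w : ℕ} (hxy : EarliestHBRace ev σ x y)
    (he : StrictPast ev σ {x, y} e) (hw : lw ev σ e = some w) : StrictPast ev σ {x, y} w := by
  obtain ⟨t, ht, het, hne⟩ := he
  have hlt : σ.idxOf e < max (σ.idxOf x) (σ.idxOf y) := by
    rcases ht with rfl | rfl
    · exact (het.idxOf_lt hne).trans_le (le_max_left _ _)
    · exact (het.idxOf_lt hne).trans_le (le_max_right _ _)
  exact StrictPast.of_hb (HB.of_lw_of_lt_earliest hxy hw hlt) ⟨t, ht, het, hne⟩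

end Race

open Race in
/-- Proposition: HB ⇒ sync-preserving.  If a well-formed trace
contains a pair of conflicting events that is an HB race, then it contains a
pair of conflicting events that is a sync-preserving race. -/
theorem hb_race_implies_syncpres_race (ev : ℕ → EventData) (σ : Trace)
    (hwf : WellFormed ev σ)
    (hhb : ∃ e1 e2 : ℕ, HBRace ev σ e1 e2) :
    ∃ e1 e2 : ℕ, SyncPresRace ev σ e1 e2 := by
  classical
  obtain ⟨x, y, hxy⟩ := exists_earliestHBRace hhb
  obtain ⟨hx, hy, hconf, hnxy, hnyx⟩ := hxy.1
  let p : ℕ → Bool := fun f => decide (StrictPast ev σ {x, y} f)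
  have hHB : ∀ e f, HB ev σ e f → p f → p e := by
    simpa [p] using fun e f hef => StrictPast.of_hb hef
  have hlw : ∀ e w, p e → lw ev σ e = some w → p w := by
    simpa [p] using fun e w => StrictPast.lw_closed hxy
  refine ⟨x, y, hx, hy, hconf, σ.filter p, correctReordering_filter hwf hHB hlw,
    syncPres_filter p, ?_, ?_⟩
  · refine enabled_filter_strictPast hx (by simp) ?_
    rintro t (rfl | rfl) h
    exacts [rfl, absurd h hnxy]
  · refine enabled_filter_strictPast hy (by simp) ?_
    rintro t (rfl | rfl) h
    exacts [absurd h hnyx, rfl]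
end

section
/- Let σ be a trace and let 0 ≤ i < j < |σ| be indices such that σ[i] and σ[j] are conflicting events. Then (σ[i], σ[j]) is an HB race in σ if and only if (σ[i], σ[j]) is an HB race in the subtrace σ[i:j], where the HB race condition in σ[i:j] is evaluated with respect to the happens-before order of σ[i:j]. -/
/-!
A happens-before chain from `e₁` to `e₂` only passes through events lying between `e₁` and
`e₂` in trace order, since every HB edge goes forward in the trace. Hence on any contiguous
piece of a trace (with distinct events) containing both endpoints, happens-before is the
restriction of happens-before in the whole trace, and a pair of events of the piece races in
the piece exactly when it races in the whole trace.
-/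

namespace Race

variable {ev : ℕ → EventData}

theorem HB.trord {σ : Trace} {e₁ e₂ : ℕ} (h : HB ev σ e₁ e₂) : trord σ e₁ e₂ := by
  induction h with
  | thread_order h => exact h.1
  | rel_acq h _ _ => exact h
  | trans _ _ ih₁ ih₂ => exact ⟨ih₁.1, ih₂.2.1, ih₁.2.2.trans ih₂.2.2⟩

structure ConvexSubtrace (τ σ : Trace) : Prop where
  trord_iff : ∀ e₁ ∈ τ, ∀ e₂ ∈ τ, trord τ e₁ e₂ ↔ trord σ e₁ e₂
  convex : ∀ e₁ e₂ e₃, e₁ ∈ τ → e₃ ∈ τ → trord σ e₁ e₂ → trord σ e₂ e₃ → e₂ ∈ τ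

theorem ConvexSubtrace.of_isInfix {τ σ : Trace} (hnd : σ.Nodup) (h : τ <:+: σ) :
    ConvexSubtrace τ σ := by
  obtain ⟨pre, suf, rfl⟩ := h
  have hpre : ∀ e ∈ τ, e ∉ pre := fun e he hp =>
    List.disjoint_of_nodup_append (List.nodup_append.1 hnd).1 hp he
  have hidx : ∀ e ∈ τ, (pre ++ τ ++ suf).idxOf e = pre.length + τ.idxOf e := fun e he => by
    rw [List.append_assoc, List.idxOf_append_of_notMem (hpre e he),
      List.idxOf_append_of_mem he]
  refine ⟨fun e₁ h₁ e₂ h₂ => ?_, fun e₁ e₂ e₃ h₁ h₃ ⟨_, _, h₁₂⟩ ⟨_, _, h₂₃⟩ => ?_⟩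
  · simp only [Race.trord, hidx e₁ h₁, hidx e₂ h₂, h₁, h₂, List.mem_append, true_or,
      or_true, Nat.add_le_add_iff_left, true_and]
  · rw [hidx e₁ h₁] at h₁₂
    rw [hidx e₃ h₃] at h₂₃
    have hlt₃ := List.idxOf_lt_length_of_mem h₃
    by_cases hp : e₂ ∈ pre
    · have := List.idxOf_lt_length_of_mem hp
      rw [List.append_assoc, List.idxOf_append_of_mem hp] at h₁₂
      omega
    by_contra hτ
    rw [List.append_assoc, List.idxOf_append_of_notMem hp,
      List.idxOf_append_of_notMem hτ] at h₂₃
    omega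

section ConvexSubtrace

variable {τ σ : Trace} (hτ : ConvexSubtrace τ σ)
include hτ

theorem HB.of_convexSubtrace {e₁ e₂ : ℕ} (h : HB ev τ e₁ e₂) : HB ev σ e₁ e₂ := by
  have htr : ∀ {a b}, Race.trord τ a b → Race.trord σ a b := fun h =>
    (hτ.trord_iff _ h.1 _ h.2.1).1 h
  induction h with
  | thread_order h => exact .thread_order ⟨htr h.1, h.2⟩
  | rel_acq h hr ha => exact .rel_acq (htr h) hr ha
  | trans _ _ ih₁ ih₂ => exact .trans ih₁ ih₂

theorem HB.to_convexSubtrace {e₁ e₂ : ℕ} (h : HB ev σ e₁ e₂) (h₁ : e₁ ∈ τ) (h₂ : e₂ ∈ τ) :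
    HB ev τ e₁ e₂ := by
  induction h with
  | thread_order h => exact .thread_order ⟨(hτ.trord_iff _ h₁ _ h₂).2 h.1, h.2⟩
  | rel_acq h hr ha => exact .rel_acq ((hτ.trord_iff _ h₁ _ h₂).2 h) hr ha
  | trans hab hbc ih₁ ih₂ =>
    have hb := hτ.convex _ _ _ h₁ h₂ hab.trord hbc.trord
    exact .trans (ih₁ h₁ hb) (ih₂ hb h₂)

theorem hbRace_iff_of_convexSubtrace {e₁ e₂ : ℕ} (h₁ : e₁ ∈ τ) (h₂ : e₂ ∈ τ) :
    HBRace ev σ e₁ e₂ ↔ HBRace ev τ e₁ e₂ := by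
  have hσ : ∀ e ∈ τ, e ∈ σ := fun e he => ((hτ.trord_iff e he e he).1 ⟨he, he, le_rfl⟩).1
  have hHB : ∀ {a b}, a ∈ τ → b ∈ τ → (HB ev σ a b ↔ HB ev τ a b) := fun ha hb =>
    ⟨fun h => h.to_convexSubtrace hτ ha hb, HB.of_convexSubtrace hτ⟩
  simp only [HBRace, hHB h₁ h₂, hHB h₂ h₁, h₁, h₂, hσ _ h₁, hσ _ h₂]

end ConvexSubtrace

end Race

theorem List.getElem_mem_take_drop {α : Type*} {l : List α} {i n k : ℕ} (hik : i ≤ k)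
    (hkn : k < i + n) (hk : k < l.length) : l[k] ∈ (l.drop i).take n :=
  List.mem_iff_getElem.2 ⟨k - i, by simp only [List.length_take, List.length_drop]; omega, by simp [Nat.add_sub_cancel' hik]⟩

open Race in
theorem hb_race_locality_iff_general (ev : ℕ → EventData) (σ : Trace)
    (hnd : σ.Nodup) (i j : ℕ) (hij : i < j) (hj : j < σ.length) :
    HBRace ev σ (σ.getD i 0) (σ.getD j 0) ↔
      HBRace ev ((σ.drop i).take (j - i + 1)) (σ.getD i 0) (σ.getD j 0) := by
  have hi : i < σ.length := hij.trans hj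
  have hinfix : (σ.drop i).take (j - i + 1) <:+: σ :=
    (List.take_prefix _ _).isInfix.trans (List.drop_suffix _ _).isInfix
  rw [List.getD_eq_getElem σ 0 hi, List.getD_eq_getElem σ 0 hj]
  exact hbRace_iff_of_convexSubtrace (ConvexSubtrace.of_isInfix hnd hinfix)
    (List.getElem_mem_take_drop le_rfl (by omega) hi)
    (List.getElem_mem_take_drop hij.le (by omega) hj)

open Race in
/-- locality of HB races, both directions.  For a trace `σ`
and indices `i < j` such that `σ[i]` and `σ[j]` are conflicting, `(σ[i], σ[j])`
is an HB race in `σ` iff it is an HB race in the subtrace `σ[i:j]`, with the HB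
race condition evaluated with respect to the happens-before order of `σ[i:j]`. -/
theorem hb_race_locality_iff (ev : ℕ → EventData) (σ : Trace)
    (hnd : σ.Nodup) (i j : ℕ) (hij : i < j) (hj : j < σ.length)
    (hconf : Conflicting ev (σ.getD i 0) (σ.getD j 0)) :
    HBRace ev σ (σ.getD i 0) (σ.getD j 0) ↔
      HBRace ev ((σ.drop i).take (j - i + 1)) (σ.getD i 0) (σ.getD j 0) :=
  hb_race_locality_iff_general ev σ hnd i j hij hj
end

section
/- For any trace σ and any events e1, e2 ∈ E_σ, e1 ⪯HB e2 if and only if ctimeσ(e1) ⊑ ctimeσ(e2). -/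
/-!
By transitivity of happens-before, causal timestamps are monotone along `⪯HB`. Conversely,
the component of `ctime e1` at the thread `t` of `e1` is at least `ltime e1`, so
`ctime e1 ⊑ ctime e2` yields an event `f` of thread `t` with `f ⪯HB e2` and
`ltime e1 ≤ ltime f`; local time is strictly monotone along a thread, so `e1` precedes `f`
in thread order, whence `e1 ⪯HB f ⪯HB e2`.
-/

namespace Race

variable (ev : ℕ → EventData) {σ : Trace}

lemma ltime_lt_ltime {f e : ℕ} (hf : f ∈ σ) (ht : (ev f).thread = (ev e).thread)
    (h : σ.idxOf f < σ.idxOf e) : ltime ev σ f < ltime ev σ e := by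
  unfold ltime
  rw [ht]
  set p : ℕ → Bool := fun g => decide ((ev g).thread = (ev e).thread)
  have hi : σ.idxOf f < σ.length := List.idxOf_lt_length_iff.2 hf
  have htake : σ.take (σ.idxOf f + 1) = σ.take (σ.idxOf f) ++ [f] := by
    rw [List.take_add_one, List.getElem?_eq_getElem hi, List.getElem_idxOf hi]
    rfl
  have hprefix : σ.take (σ.idxOf f + 1) <+: σ.take (σ.idxOf e) := by
    simpa only [List.take_take, min_eq_left (Nat.succ_le_of_lt h)] using
      List.take_prefix (σ.idxOf f + 1) (σ.take (σ.idxOf e))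
  have hpf : p f = true := decide_eq_true ht
  have hle := (hprefix.sublist.filter p).length_le
  rw [htake, List.filter_append, List.length_append] at hle
  simp only [List.filter, hpf, List.length_singleton] at hle
  omega

lemma threadOrd_of_ltime_le {e f : ℕ} (he : e ∈ σ) (hf : f ∈ σ)
    (ht : (ev e).thread = (ev f).thread) (h : ltime ev σ e ≤ ltime ev σ f) :
    threadOrd ev σ e f :=
  ⟨⟨he, hf, not_lt.1 fun hlt => (ltime_lt_ltime ev hf ht.symm hlt).not_ge h⟩, ht⟩

lemma HB.refl {e : ℕ} (he : e ∈ σ) : HB ev σ e e :=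
  HB.thread_order ⟨⟨he, he, le_rfl⟩, rfl⟩

lemma finite_ctime_set (e t : ℕ) :
    (insert (-1)
      {n : ℤ | ∃ f ∈ σ, (ev f).thread = t ∧ HB ev σ f e ∧ n = (ltime ev σ f : ℤ)}).Finite := by
  refine Set.Finite.insert _ ((σ.toFinset.finite_toSet.image fun f => (ltime ev σ f : ℤ)).subset ?_)
  rintro n ⟨f, hf, -, -, rfl⟩
  exact ⟨f, List.mem_toFinset.2 hf, rfl⟩

lemma ltime_le_ctime {f e : ℕ} (hf : f ∈ σ) (h : HB ev σ f e) :
    (ltime ev σ f : ℤ) ≤ ctime ev σ e (ev f).thread :=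
  le_csSup (finite_ctime_set ev e _).bddAbove (Set.mem_insert_of_mem _ ⟨f, hf, rfl, h, rfl⟩)

lemma ctime_eq_neg_one_or_exists (e t : ℕ) :
    ctime ev σ e t = -1 ∨
      ∃ f ∈ σ, (ev f).thread = t ∧ HB ev σ f e ∧ ctime ev σ e t = ltime ev σ f :=
  Set.Nonempty.csSup_mem ⟨-1, Set.mem_insert _ _⟩ (finite_ctime_set ev e t)

lemma ctime_mono {e1 e2 : ℕ} (h : HB ev σ e1 e2) (t : ℕ) :
    ctime ev σ e1 t ≤ ctime ev σ e2 t := by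
  refine csSup_le_csSup (finite_ctime_set ev e2 t).bddAbove ⟨-1, Set.mem_insert _ _⟩ ?_
  rintro n (rfl | ⟨f, hf, hft, hfe, rfl⟩)
  · exact Set.mem_insert _ _
  · exact Set.mem_insert_of_mem _ ⟨f, hf, hft, hfe.trans h, rfl⟩

end Race

open Race in
theorem hb_iff_ctime_le_general (ev : ℕ → EventData) (σ : Trace)
    (e1 e2 : ℕ) (h1 : e1 ∈ σ) :
    HB ev σ e1 e2 ↔ ∀ t : ℕ, ctime ev σ e1 t ≤ ctime ev σ e2 t := by
  refine ⟨fun h => ctime_mono ev h, fun h => ?_⟩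
  have hle : (ltime ev σ e1 : ℤ) ≤ ctime ev σ e2 (ev e1).thread :=
    (ltime_le_ctime ev h1 (HB.refl ev h1)).trans (h _)
  rcases ctime_eq_neg_one_or_exists ev e2 (ev e1).thread with hneg | ⟨f, hf, hft, hfe, heq⟩
  · rw [hneg] at hle
    omega
  · rw [heq, Nat.cast_le] at hle
    exact (HB.thread_order (threadOrd_of_ltime_le ev h1 hf hft.symm hle)).trans hfe

open Race in
/-- for events `e1, e2` of a trace `σ`, `e1 ⪯HB e2` iff the
causal timestamp of `e1` is pointwise below that of `e2`. -/
theorem hb_iff_ctime_le (ev : ℕ → EventData) (σ : Trace) (hnd : σ.Nodup)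
    (e1 e2 : ℕ) (h1 : e1 ∈ σ) (h2 : e2 ∈ σ) :
    HB ev σ e1 e2 ↔ ∀ t : ℕ, ctime ev σ e1 t ≤ ctime ev σ e2 t :=
  hb_iff_ctime_le_general ev σ e1 e2 h1
end

section
/- There exist a well-formed subtrace σ that begins with an event e1 and ends with an event e2, and well-formed traces σ1 and σ2, such that σ occurs as a contiguous subtrace of both σ1 and σ2, (e1, e2) is a sync-preserving race in σ2, and (e1, e2) is not a sync-preserving race in σ1. -/
/-!
Take the core trace `σ = w₀(x) w₀(z) r₂(z) rel₂(ℓ) r₁(y) acq₁(ℓ) rel₁(ℓ) w₁(x)`, racing its first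
and last event.  Preceded by `acq₂(ℓ) w₂(y)` it becomes `σ₁`: enabling `w₁(x)` forces
`r₁(y) acq₁(ℓ) rel₁(ℓ)` into the reordering, hence the writer `w₂(y)` of `r₁(y)` and, by thread
order, `acq₂(ℓ)`, which sync-preservation keeps before `acq₁(ℓ)`.  So `ℓ` must be released in
between; `rel₁(ℓ)` comes after `acq₁(ℓ)`, and `rel₂(ℓ)` drags in `r₂(z)`, its writer `w₀(z)` and
hence `w₀(x)`, which was to stay enabled.  Preceded instead by `acq₂(ℓ) w₃(y)` it becomes `σ₂`, where `r₁(y)`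
reads from thread 3 and `w₃(y) r₁(y) acq₁(ℓ) rel₁(ℓ)` enables both events.
-/

theorem List.Sublist.idxOf_le_idxOf_iff {α : Type*} [BEq α] [LawfulBEq α] {ρ σ : List α}
    (hsub : ρ.Sublist σ) (hnd : σ.Nodup) {a b : α} (ha : a ∈ ρ) (hb : b ∈ ρ) :
    ρ.idxOf a ≤ ρ.idxOf b ↔ σ.idxOf a ≤ σ.idxOf b := by
  induction hsub with
  | slnil => simp
  | @cons ρ σ x hsub ih =>
    have hx : x ∉ ρ := fun hx => (List.nodup_cons.1 hnd).1 (hsub.subset hx)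
    have hxa : x ≠ a := fun h => hx (h ▸ ha)
    have hxb : x ≠ b := fun h => hx (h ▸ hb)
    rw [List.idxOf_cons_ne _ hxa, List.idxOf_cons_ne _ hxb, Nat.succ_le_succ_iff]
    exact ih hnd.of_cons ha hb
  | @cons_cons ρ σ x hsub ih =>
    by_cases hxa : x = a
    · simp [List.idxOf_cons_eq _ hxa]
    by_cases hxb : x = b
    · simp [List.idxOf_cons_eq _ hxb, List.idxOf_cons_ne _ hxa]
    have ha' := List.mem_of_ne_of_mem (Ne.symm hxa) ha
    have hb' := List.mem_of_ne_of_mem (Ne.symm hxb) hb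
    simp only [List.idxOf_cons_ne _ hxa, List.idxOf_cons_ne _ hxb, Nat.succ_le_succ_iff]
    exact ih hnd.of_cons ha' hb'

namespace Race

variable {ev : ℕ → EventData}

instance decidableLockOk (ev : ℕ → EventData) :
    (h : ℕ → Option ℕ) → (σ : Trace) → Decidable (lockOk ev h σ)
  | _, [] => isTrue trivial
  | h, e :: rest =>
    match hop : (ev e).op with
    | .read _ | .write _ =>
      haveI := decidableLockOk ev h rest
      decidable_of_iff (lockOk ev h rest) (by simp [lockOk, hop])
    | .acq l =>
      haveI := decidableLockOk ev (Function.update h l (some (ev e).thread)) rest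
      decidable_of_iff (h l = none ∧ lockOk ev (Function.update h l (some (ev e).thread)) rest)
        (by simp [lockOk, hop])
    | .rel l =>
      haveI := decidableLockOk ev (Function.update h l none) rest
      decidable_of_iff (h l = some (ev e).thread ∧ lockOk ev (Function.update h l none) rest)
        (by simp [lockOk, hop])

instance (σ : Trace) (a b : ℕ) : Decidable (trord σ a b) :=
  inferInstanceAs (Decidable (_ ∧ _ ∧ _))

instance (ev : ℕ → EventData) (σ : Trace) (a b : ℕ) : Decidable (threadOrd ev σ a b) :=
  inferInstanceAs (Decidable (_ ∧ _))

instance (ev : ℕ → EventData) (ρ : Trace) : Decidable (WellFormed ev ρ) :=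
  inferInstanceAs (Decidable (_ ∧ _))

theorem trord_antisymm {σ : Trace} {a b : ℕ} (hab : trord σ a b) (hba : trord σ b a) : a = b :=
  (List.idxOf_inj hab.1).1 (le_antisymm hab.2.2 hba.2.2)

theorem lw_eq_none_of_not_read {σ : Trace} {e : ℕ} (h : ∀ x, (ev e).op ≠ .read x) :
    lw ev σ e = none := by
  rcases hop : (ev e).op with x | x | l | l <;> simp_all [lw]

theorem mem_of_lw_eq_some {σ : Trace} {e f : ℕ} (h : lw ev σ e = some f) : f ∈ σ := by
  unfold lw at h
  split at h
  · exact List.mem_of_mem_take (List.mem_of_mem_filter (List.mem_of_getLast? h))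
  · cases h

theorem correctReordering_iff {σ ρ : Trace} :
    CorrectReordering ev σ ρ ↔ WellFormed ev ρ ∧ (∀ e ∈ ρ, e ∈ σ) ∧
      (∀ e2 ∈ ρ, ∀ e1 ∈ σ, threadOrd ev σ e1 e2 → e1 ∈ ρ ∧ threadOrd ev ρ e1 e2) ∧
      (∀ e ∈ ρ, lw ev ρ e = lw ev σ e) := by
  constructor
  · rintro ⟨hwf, hsub, hto, hlw⟩
    refine ⟨hwf, hsub, fun e2 he2 e1 _ h => hto e1 e2 h he2, fun e he => ?_⟩
    by_cases hread : ∃ x, (ev e).op = .read x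
    · exact hlw e he hread
    · simp only [not_exists] at hread
      rw [lw_eq_none_of_not_read hread, lw_eq_none_of_not_read hread]
  · rintro ⟨hwf, hsub, hto, hlw⟩
    exact ⟨hwf, hsub, fun e1 e2 h he2 => hto e2 he2 e1 h.1.1 h, fun e he _ => hlw e he⟩

theorem enabled_iff {σ ρ : Trace} {e : ℕ} :
    Enabled ev σ ρ e ↔ e ∈ σ ∧ e ∉ ρ ∧ ∀ f ∈ σ, threadOrd ev σ f e → f ≠ e → f ∈ ρ :=
  and_congr_right fun _ => and_congr_right fun _ =>
    ⟨fun h f _ => h f, fun h f hf => h f hf.1.1 hf⟩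

instance (ev : ℕ → EventData) (σ ρ : Trace) : Decidable (CorrectReordering ev σ ρ) :=
  decidable_of_iff _ correctReordering_iff.symm

instance (ev : ℕ → EventData) (σ ρ : Trace) (e : ℕ) : Decidable (Enabled ev σ ρ e) :=
  decidable_of_iff _ enabled_iff.symm

theorem CorrectReordering.mem_of_threadOrd {σ ρ : Trace} {e1 e2 : ℕ}
    (hcr : CorrectReordering ev σ ρ) (h : threadOrd ev σ e1 e2) (he2 : e2 ∈ ρ) : e1 ∈ ρ :=
  (hcr.to_closed e1 e2 h he2).1

theorem CorrectReordering.mem_of_lw {σ ρ : Trace} {e f : ℕ} (hcr : CorrectReordering ev σ ρ)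
    (he : e ∈ ρ) (hlw : lw ev σ e = some f) : f ∈ ρ := by
  by_cases hread : ∃ x, (ev e).op = .read x
  · exact mem_of_lw_eq_some (hcr.lw_eq e he hread ▸ hlw)
  · simp only [not_exists] at hread
    simp [lw_eq_none_of_not_read hread] at hlw

theorem Enabled.mem_of_threadOrd {σ ρ : Trace} {e f : ℕ} (he : Enabled ev σ ρ e)
    (h : threadOrd ev σ f e) (hne : f ≠ e) : f ∈ ρ :=
  he.2.2 f h hne

theorem lockOk_cons_tail {h : ℕ → Option ℕ} {e : ℕ} {rest : Trace}
    (hok : lockOk ev h (e :: rest)) : ∃ h', lockOk ev h' rest := by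
  rcases hop : (ev e).op with x | x | l | l <;> simp only [lockOk, hop] at hok
  exacts [⟨h, hok⟩, ⟨h, hok⟩, ⟨_, hok.2⟩, ⟨_, hok.2⟩]

theorem lockOk_cons_of_held {h : ℕ → Option ℕ} {e l : ℕ} {rest : Trace}
    (hok : lockOk ev h (e :: rest)) (hl : h l ≠ none) (hrel : (ev e).op ≠ .rel l) :
    ∃ h', h' l ≠ none ∧ lockOk ev h' rest := by
  rcases hop : (ev e).op with x | x | l' | l' <;> simp only [lockOk, hop] at hok
  · exact ⟨h, hl, hok⟩
  · exact ⟨h, hl, hok⟩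
  · have hne : l ≠ l' := by rintro rfl; exact hl hok.1
    exact ⟨_, by rwa [Function.update_of_ne hne], hok.2⟩
  · have hne : l ≠ l' := by rintro rfl; exact hrel hop
    exact ⟨_, by rwa [Function.update_of_ne hne], hok.2⟩

theorem exists_rel_before_acq_of_held {l b : ℕ} :
    ∀ {h : ℕ → Option ℕ} {ρ : Trace}, lockOk ev h ρ → h l ≠ none → b ∈ ρ →
      (ev b).op = .acq l → ∃ r ∈ ρ, (ev r).op = .rel l ∧ ρ.idxOf r < ρ.idxOf b
  | _, [], _, _, hb, _ => absurd hb List.not_mem_nil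
  | h, e :: rest, hok, hl, hb, hacq => by
    have heb : e ≠ b := by
      rintro rfl
      simp only [lockOk, hacq] at hok
      exact hl hok.1
    rw [List.idxOf_cons_ne _ heb]
    by_cases hrel : (ev e).op = .rel l
    · exact ⟨e, List.mem_cons_self, hrel, by simp⟩
    obtain ⟨h', hl', hok'⟩ := lockOk_cons_of_held hok hl hrel
    obtain ⟨r, hr, hrrel, hlt⟩ :=
      exists_rel_before_acq_of_held hok' hl' (List.mem_of_ne_of_mem heb.symm hb) hacq
    refine ⟨r, List.mem_cons_of_mem _ hr, hrrel, ?_⟩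
    by_cases her : e = r
    · simp [List.idxOf_cons_eq _ her]
    · rw [List.idxOf_cons_ne _ her]; omega

theorem exists_rel_between_of_lockOk {a b l : ℕ} (ha : (ev a).op = .acq l)
    (hb : (ev b).op = .acq l) : ∀ {h : ℕ → Option ℕ} {ρ : Trace}, ρ.Nodup → lockOk ev h ρ →
      a ∈ ρ → b ∈ ρ → ρ.idxOf a < ρ.idxOf b →
      ∃ r ∈ ρ, (ev r).op = .rel l ∧ ρ.idxOf a < ρ.idxOf r ∧ ρ.idxOf r < ρ.idxOf b
  | _, [], _, _, haρ, _, _ => absurd haρ List.not_mem_nil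
  | h, e :: rest, hnd, hok, haρ, hbρ, hlt => by
    obtain ⟨he, hnd'⟩ := List.nodup_cons.1 hnd
    have heb : e ≠ b := by rintro rfl; simp at hlt
    have hbr : b ∈ rest := List.mem_of_ne_of_mem heb.symm hbρ
    have shift : ∀ r ∈ rest, (e :: rest).idxOf r = rest.idxOf r + 1 := fun r hr =>
      List.idxOf_cons_ne _ (fun her => he (her ▸ hr))
    by_cases hea : e = a
    · subst hea
      simp only [lockOk, ha] at hok
      obtain ⟨r, hr, hrel, hrb⟩ := exists_rel_before_acq_of_held hok.2 (by simp) hbr hb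
      refine ⟨r, List.mem_cons_of_mem _ hr, hrel, ?_⟩
      simp only [shift r hr, shift b hbr, List.idxOf_cons_self]
      omega
    · have har : a ∈ rest := List.mem_of_ne_of_mem (Ne.symm hea) haρ
      obtain ⟨h', hok'⟩ := lockOk_cons_tail hok
      simp only [shift a har, shift b hbr] at hlt
      obtain ⟨r, hr, hrel, h1, h2⟩ :=
        exists_rel_between_of_lockOk ha hb hnd' hok' har hbr (by omega)
      refine ⟨r, List.mem_cons_of_mem _ hr, hrel, ?_⟩
      simp only [shift r hr, shift a har, shift b hbr]
      omega

theorem WellFormed.exists_rel_between {ρ : Trace} {a b l : ℕ} (hwf : WellFormed ev ρ)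
    (hab : trord ρ a b) (hne : a ≠ b) (ha : (ev a).op = .acq l) (hb : (ev b).op = .acq l) :
    ∃ r, (ev r).op = .rel l ∧ trord ρ a r ∧ trord ρ r b := by
  obtain ⟨haρ, hbρ, hle⟩ := hab
  have hlt : ρ.idxOf a < ρ.idxOf b :=
    lt_of_le_of_ne hle (fun heq => hne ((List.idxOf_inj haρ).1 heq))
  obtain ⟨r, hr, hrel, h1, h2⟩ := exists_rel_between_of_lockOk ha hb hwf.1 hwf.2 haρ hbρ hlt
  exact ⟨r, hrel, ⟨haρ, hr, h1.le⟩, ⟨hr, hbρ, h2.le⟩⟩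

theorem syncPres_of_sublist {σ ρ : Trace} (hnd : σ.Nodup) (hsub : ρ.Sublist σ) :
    SyncPres ev σ ρ := fun a1 a2 _ h1 h2 _ _ => by
  simp only [trord, h1, h2, hsub.subset h1, hsub.subset h2, true_and,
    hsub.idxOf_le_idxOf_iff hnd h1 h2]

end Race

namespace SyncPresNonLocal

open Race

-- Locations `x, y, z` are `0, 1, 2`, the lock `ℓ` is `0`; `σ₁ = [0, 1] ++ core` lists the events
-- in order, and `σ₂ = [0, 10] ++ core`.
def events : ℕ → EventData
  | 0 => ⟨2, .acq 0⟩
  | 1 => ⟨2, .write 1⟩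
  | 2 => ⟨0, .write 0⟩
  | 3 => ⟨0, .write 2⟩
  | 4 => ⟨2, .read 2⟩
  | 5 => ⟨2, .rel 0⟩
  | 6 => ⟨1, .read 1⟩
  | 7 => ⟨1, .acq 0⟩
  | 8 => ⟨1, .rel 0⟩
  | 9 => ⟨1, .write 0⟩
  | 10 => ⟨3, .write 1⟩
  | _ => ⟨4, .read 3⟩

def core : Trace := [2, 3, 4, 5, 6, 7, 8, 9]

theorem conflicting : Conflicting events 2 9 :=
  ⟨by decide, ⟨0, rfl, rfl⟩, .inl ⟨0, rfl⟩⟩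

theorem wellFormed₁ : WellFormed events ([0, 1] ++ core ++ []) := by decide

theorem wellFormed₂ : WellFormed events ([0, 10] ++ core ++ []) := by decide

theorem syncPresRace₂ : SyncPresRace events ([0, 10] ++ core ++ []) 2 9 :=
  ⟨by decide, by decide, conflicting, [10, 6, 7, 8], by decide,
    syncPres_of_sublist (by decide) (by decide), by decide, by decide⟩

theorem not_syncPresRace₁ : ¬ SyncPresRace events ([0, 1] ++ core ++ []) 2 9 := by
  rintro ⟨-, -, -, ρ, hcr, hsp, he1, he2⟩
  have h7 : 7 ∈ ρ := he2.mem_of_threadOrd (by decide) (by decide)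
  have h8 : 8 ∈ ρ := he2.mem_of_threadOrd (by decide) (by decide)
  have h0 : 0 ∈ ρ :=
    hcr.mem_of_threadOrd (e2 := 1) (by decide)
      (hcr.mem_of_lw (he2.mem_of_threadOrd (f := 6) (by decide) (by decide)) (by decide))
  have h3 : 3 ∉ ρ := fun h3 => he1.2.1 (hcr.mem_of_threadOrd (by decide) h3)
  have h5 : 5 ∉ ρ := fun h5 =>
    h3 (hcr.mem_of_lw (e := 4) (hcr.mem_of_threadOrd (by decide) h5) (by decide))
  have h07 : trord ρ 0 7 := (hsp 0 7 0 h0 h7 rfl rfl).2 (by decide)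
  have h78 : trord ρ 7 8 := (hcr.to_closed 7 8 (by decide) h8).2.1
  obtain ⟨r, hrel, -, hr7⟩ := hcr.wf.exists_rel_between h07 (by decide) rfl rfl
  have hreleases : ∀ r ∈ [0, 1] ++ core ++ [], (events r).op = .rel 0 → r = 5 ∨ r = 8 := by
    decide
  rcases hreleases r (hcr.subset r hr7.1) hrel with rfl | rfl
  · exact h5 hr7.1
  · exact absurd (trord_antisymm hr7 h78) (by decide)

end SyncPresNonLocal

open Race in
/-- non-locality of sync-preserving races.  There are a
well-formed subtrace `σ` beginning with `e1` and ending with `e2`, and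
well-formed traces `σ1`, `σ2`, each containing `σ` as a contiguous subtrace,
such that `(e1, e2)` is a sync-preserving race in `σ2` but not in `σ1`. -/
theorem syncpres_race_not_local :
    ∃ (ev : ℕ → EventData) (σ pre1 suf1 pre2 suf2 : Trace) (e1 e2 : ℕ),
      σ.head? = some e1 ∧ σ.getLast? = some e2 ∧
      WellFormedSub ev σ ∧
      WellFormed ev (pre1 ++ σ ++ suf1) ∧
      WellFormed ev (pre2 ++ σ ++ suf2) ∧
      Conflicting ev e1 e2 ∧
      SyncPresRace ev (pre2 ++ σ ++ suf2) e1 e2 ∧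
      ¬ SyncPresRace ev (pre1 ++ σ ++ suf1) e1 e2 :=
  open SyncPresNonLocal in
  ⟨events, core, [0, 1], [], [0, 10], [], 2, 9, rfl, rfl, ⟨_, _, wellFormed₁⟩, wellFormed₁,
    wellFormed₂, conflicting, syncPresRace₂, not_syncPresRace₁⟩
end

section
/- Let t1, t2, t3 be pairwise distinct thread identifiers, x a memory location, and ℓ a lock. Let σ be the event sequence e1=(t1, w(x)), (t3, r(x)), (t3, rel(ℓ)), (t2, acq(ℓ)), (t2, rel(ℓ)), e2=(t2, w(x)), and let σ2 = (t3, acq(ℓ)) · σ. Then σ2 is a well-formed trace, SPIdeal_{σ2}(e1, e2) ∩ {e1, e2} = ∅, and (e1, e2) is a sync-preserving race in σ2. -/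
/-!
The witness reordering is the critical section `(t2, acq ℓ) (t2, rel ℓ)` of `t2` alone, i.e.
the events `4, 5`. It contains no read and a single acquire, so it is at once a correct
reordering, sync-preserving, and sync-preserving closed. Both racing events are enabled in it,
so it contains their thread predecessors; being the least SP-closed set containing these, the
SP-ideal lies inside it and misses `1` and `6`.
-/

theorem List.idxOf_range' {a n e : ℕ} (ha : a ≤ e) (hn : e < a + n) :
    (List.range' a n).idxOf e = e - a := by
  have hi : e - a < (List.range' a n).length := by simp only [List.length_range']; omega
  simpa [List.getElem_range', Nat.add_sub_cancel' ha] using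
    (List.nodup_range' (s := a) (n := n)).idxOf_getElem _ hi

namespace Race

section Reorderings

variable {ev : ℕ → EventData}

theorem trord_range'_iff {a n e1 e2 : ℕ} :
    trord (List.range' a n) e1 e2 ↔ a ≤ e1 ∧ e1 ≤ e2 ∧ e2 < a + n := by
  simp only [trord, List.mem_range'_1]
  constructor
  · rintro ⟨⟨ha1, hn1⟩, ⟨ha2, hn2⟩, hle⟩
    rw [List.idxOf_range' ha1 hn1, List.idxOf_range' ha2 hn2] at hle
    omega
  · rintro ⟨ha, hle, hn⟩
    refine ⟨⟨ha, by omega⟩, ⟨by omega, hn⟩, ?_⟩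
    rw [List.idxOf_range' ha (by omega), List.idxOf_range' (by omega) hn]
    omega

theorem threadOrd_range_iff {n e1 e2 : ℕ} :
    threadOrd ev (List.range n) e1 e2 ↔ e1 ≤ e2 ∧ e2 < n ∧ (ev e1).thread = (ev e2).thread := by
  simp only [threadOrd, List.range_eq_range', trord_range'_iff, zero_le, true_and, zero_add,
    and_assoc]

theorem lw_eq_none {σ : Trace} {e : ℕ} (h : ∀ x, (ev e).op ≠ Op.read x) : lw ev σ e = none := by
  unfold lw
  split
  · exact absurd ‹_› (h _)
  · rfl

theorem threadOrd_of_prevE_eq_some {σ : Trace} {e f : ℕ} (he : e ∈ σ)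
    (hf : prevE ev σ e = some f) : threadOrd ev σ f e ∧ f ≠ e := by
  have hmem := List.mem_of_getLast? hf
  rw [List.mem_filter, decide_eq_true_iff] at hmem
  obtain ⟨htake, hthread⟩ := hmem
  have hfσ := List.mem_of_mem_take htake
  have hlt := (List.mem_take_iff_idxOf_lt hfσ).1 htake
  exact ⟨⟨⟨hfσ, he, hlt.le⟩, hthread⟩, fun hfe => (hfe ▸ hlt).false⟩

theorem mem_of_enabled_of_prevE_eq_some {σ ρ : Trace} {e f : ℕ} (he : Enabled ev σ ρ e)
    (hf : prevE ev σ e = some f) : f ∈ ρ :=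
  have ⟨hto, hne⟩ := threadOrd_of_prevE_eq_some he.1 hf
  he.2.2 f hto hne

theorem spClosed_of_forall_ne_read {σ : Trace} {S : Set ℕ} (hσ : ∀ e ∈ S, e ∈ σ)
    (hto : ∀ e1 e2, threadOrd ev σ e1 e2 → e2 ∈ S → e1 ∈ S)
    (hread : ∀ e ∈ S, ∀ x, (ev e).op ≠ Op.read x)
    (hacq : ∀ a1 ∈ S, ∀ a2 ∈ S, ∀ l, (ev a1).op = Op.acq l → (ev a2).op = Op.acq l → a1 = a2) :
    SPClosed ev σ S := by
  refine ⟨⟨hσ, hto, fun e he f hf => ?_⟩, fun a1 a2 l h1 h2 hop1 hop2 _ hne => ?_⟩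
  · rw [lw_eq_none (hread e he)] at hf
    cases hf
  · exact absurd (hacq a1 h1 a2 h2 l hop1 hop2) hne

theorem spClosure_subset {σ : Trace} {S C : Set ℕ} (hC : SPClosed ev σ C) (hS : S ⊆ C) :
    SPClosure ev σ S ⊆ C :=
  Set.sInter_subset_of_mem ⟨hC, hS⟩

theorem spIdeal_inter_eq_empty {σ ρ : Trace} {e1 e2 : ℕ} (hρ : SPClosed ev σ {e | e ∈ ρ})
    (h1 : Enabled ev σ ρ e1) (h2 : Enabled ev σ ρ e2) :
    SPIdeal ev σ e1 e2 ∩ {e1, e2} = ∅ := by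
  have hsub : SPIdeal ev σ e1 e2 ⊆ {e | e ∈ ρ} := spClosure_subset hρ <| by
    rintro f (hf | hf)
    exacts [mem_of_enabled_of_prevE_eq_some h1 hf, mem_of_enabled_of_prevE_eq_some h2 hf]
  refine Set.eq_empty_iff_forall_notMem.2 fun e ⟨he, he12⟩ => ?_
  rcases he12 with rfl | rfl
  exacts [h1.2.1 (hsub he), h2.2.1 (hsub he)]

theorem syncPres_of_acq_unique {σ ρ : Trace} (hσ : ∀ e ∈ ρ, e ∈ σ)
    (hacq : ∀ a1 ∈ ρ, ∀ a2 ∈ ρ, ∀ l, (ev a1).op = Op.acq l → (ev a2).op = Op.acq l → a1 = a2) :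
    SyncPres ev σ ρ := by
  intro a1 a2 l h1 h2 hop1 hop2
  obtain rfl := hacq a1 h1 a2 h2 l hop1 hop2
  exact iff_of_true ⟨h1, h1, le_rfl⟩ ⟨hσ a1 h1, hσ a1 h1, le_rfl⟩

theorem correctReordering_of_forall_ne_read {σ ρ : Trace} (hwf : WellFormed ev ρ)
    (hσ : ∀ e ∈ ρ, e ∈ σ)
    (hto : ∀ e1 e2, threadOrd ev σ e1 e2 → e2 ∈ ρ → e1 ∈ ρ ∧ threadOrd ev ρ e1 e2)
    (hread : ∀ e ∈ ρ, ∀ x, (ev e).op ≠ Op.read x) :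
    CorrectReordering ev σ ρ :=
  ⟨hwf, hσ, hto, fun e he ⟨x, hx⟩ => absurd hx (hread e he x)⟩

end Reorderings

section Sigma2

variable {t1 t2 t3 x l : ℕ}

def sigma2Ev (t1 t2 t3 x l i : ℕ) : EventData :=
  [⟨t3, Op.acq l⟩, ⟨t1, Op.write x⟩, ⟨t3, Op.read x⟩, ⟨t3, Op.rel l⟩,
    ⟨t2, Op.acq l⟩, ⟨t2, Op.rel l⟩, ⟨t2, Op.write x⟩].getD i ⟨0, Op.read 0⟩

theorem sigma2_wellFormed : WellFormed (sigma2Ev t1 t2 t3 x l) (List.range 7) :=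
  ⟨List.nodup_range, by simp [lockOk, sigma2Ev, List.range_succ]⟩

theorem sigma2_wellFormed_range' : WellFormed (sigma2Ev t1 t2 t3 x l) (List.range' 4 2) :=
  ⟨List.nodup_range', by simp [lockOk, sigma2Ev, List.range'_succ]⟩

theorem sigma2Ev_eq_one_of_thread_eq (h12 : t1 ≠ t2) (h13 : t1 ≠ t3) {f : ℕ} (hf : f < 7)
    (h : (sigma2Ev t1 t2 t3 x l f).thread = t1) : f = 1 := by
  interval_cases f <;> simp_all [sigma2Ev, eq_comm]

theorem sigma2Ev_four_le_of_thread_eq (h12 : t1 ≠ t2) (h23 : t2 ≠ t3) {f : ℕ} (hf : f < 7)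
    (h : (sigma2Ev t1 t2 t3 x l f).thread = t2) : 4 ≤ f := by
  interval_cases f <;> simp_all [sigma2Ev, eq_comm]

theorem sigma2_enabled_one (h12 : t1 ≠ t2) (h13 : t1 ≠ t3) :
    Enabled (sigma2Ev t1 t2 t3 x l) (List.range 7) (List.range' 4 2) 1 := by
  refine ⟨by simp, by simp, fun f hf hne => ?_⟩
  rw [threadOrd_range_iff] at hf
  exact absurd (sigma2Ev_eq_one_of_thread_eq h12 h13 (by omega) hf.2.2) hne

theorem sigma2_enabled_six (h12 : t1 ≠ t2) (h23 : t2 ≠ t3) :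
    Enabled (sigma2Ev t1 t2 t3 x l) (List.range 7) (List.range' 4 2) 6 := by
  refine ⟨by simp, by simp, fun f hf hne => ?_⟩
  rw [threadOrd_range_iff] at hf
  have := sigma2Ev_four_le_of_thread_eq h12 h23 (by omega) hf.2.2
  simp only [List.mem_range'_1]
  omega

theorem sigma2_threadOrd_closed (h12 : t1 ≠ t2) (h23 : t2 ≠ t3) (e1 e2 : ℕ)
    (hto : threadOrd (sigma2Ev t1 t2 t3 x l) (List.range 7) e1 e2) (he2 : e2 ∈ List.range' 4 2) :
    e1 ∈ List.range' 4 2 ∧ threadOrd (sigma2Ev t1 t2 t3 x l) (List.range' 4 2) e1 e2 := by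
  rw [threadOrd_range_iff] at hto
  obtain ⟨hle, h7, hthread⟩ := hto
  rw [List.mem_range'_1] at he2
  have h2 : (sigma2Ev t1 t2 t3 x l e2).thread = t2 := by
    obtain rfl | rfl : e2 = 4 ∨ e2 = 5 := by omega
    all_goals rfl
  have := sigma2Ev_four_le_of_thread_eq h12 h23 (by omega) (hthread.trans h2)
  exact ⟨List.mem_range'_1.2 (by omega), trord_range'_iff.2 (by omega), hthread⟩

theorem sigma2Ev_ne_read {e : ℕ} (he : e ∈ List.range' 4 2) (y : ℕ) :
    (sigma2Ev t1 t2 t3 x l e).op ≠ Op.read y := by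
  rw [List.mem_range'_1] at he
  obtain rfl | rfl : e = 4 ∨ e = 5 := by omega
  all_goals simp [sigma2Ev]

theorem sigma2Ev_acq_unique (a1 : ℕ) (h1 : a1 ∈ List.range' 4 2) (a2 : ℕ)
    (h2 : a2 ∈ List.range' 4 2) (l' : ℕ) (hop1 : (sigma2Ev t1 t2 t3 x l a1).op = Op.acq l')
    (hop2 : (sigma2Ev t1 t2 t3 x l a2).op = Op.acq l') : a1 = a2 := by
  rw [List.mem_range'_1] at h1 h2
  obtain rfl | rfl : a1 = 4 ∨ a1 = 5 := by omega
  all_goals obtain rfl | rfl : a2 = 4 ∨ a2 = 5 := by omega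
  all_goals simp_all [sigma2Ev]

end Sigma2

end Race

open Race in
/-- in the 7-event trace
`σ2 = (t3,acq ℓ) e1=(t1,w x) (t3,r x) (t3,rel ℓ) (t2,acq ℓ) (t2,rel ℓ)
e2=(t2,w x)` (with `e1` at position 1 and `e2` at position 6), `σ2` is
well-formed, `SPIdeal σ2 (e1,e2) ∩ {e1,e2} = ∅`, and `(e1,e2)` is a
sync-preserving race in `σ2`. -/
theorem sigma2_syncpres_race (t1 t2 t3 x l : ℕ)
    (h12 : t1 ≠ t2) (h13 : t1 ≠ t3) (h23 : t2 ≠ t3) :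
    let L : List EventData :=
      [⟨t3, Op.acq l⟩, ⟨t1, Op.write x⟩, ⟨t3, Op.read x⟩, ⟨t3, Op.rel l⟩,
       ⟨t2, Op.acq l⟩, ⟨t2, Op.rel l⟩, ⟨t2, Op.write x⟩]
    let ev : ℕ → EventData := fun i => L.getD i ⟨0, Op.read 0⟩
    let σ2 : Trace := List.range 7
    WellFormed ev σ2 ∧
    SPIdeal ev σ2 1 6 ∩ ({1, 6} : Set ℕ) = (∅ : Set ℕ) ∧
    SyncPresRace ev σ2 1 6 := by
  intro L ev σ2
  have hsub : ∀ e ∈ List.range' 4 2, e ∈ σ2 := fun e he => by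
    simp only [σ2, List.mem_range, List.mem_range'_1] at he ⊢
    omega
  have hclosed := sigma2_threadOrd_closed (x := x) (l := l) h12 h23
  have hread : ∀ e ∈ List.range' 4 2, ∀ y, (ev e).op ≠ Op.read y :=
    fun e he => sigma2Ev_ne_read he
  have hρ : SPClosed ev σ2 {e | e ∈ List.range' 4 2} :=
    spClosed_of_forall_ne_read hsub (fun e1 e2 hto he2 => (hclosed e1 e2 hto he2).1) hread
      sigma2Ev_acq_unique
  have hen1 : Enabled ev σ2 (List.range' 4 2) 1 := sigma2_enabled_one h12 h13
  have hen6 : Enabled ev σ2 (List.range' 4 2) 6 := sigma2_enabled_six h12 h23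
  exact ⟨sigma2_wellFormed, spIdeal_inter_eq_empty hρ hen1 hen6, by simp [σ2], by simp [σ2],
    ⟨h12, ⟨x, rfl, rfl⟩, Or.inl ⟨x, rfl⟩⟩, List.range' 4 2,
    correctReordering_of_forall_ne_read sigma2_wellFormed_range' hsub hclosed hread,
    syncPres_of_acq_unique hsub sigma2Ev_acq_unique, hen1, hen6⟩
end
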